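/- arXiv:2102.06753 — 3 statements merged into one kernel-verified Lean document; each statement's English description precedes it below -/
import Mathlib

section
/- If x1 and x2 are Boolean random variables each independent of a secret s, and x1 is independent of x2 conditional on s (e.g., they are computed from disjoint sets of random inputs together with s-independent values), and x2 is uniformly distributed and independent of (x1, s), then x1 ∧ x2 is independent of s. -/
/-! If `(X, Z)` is independent of `Y` and `X` is independent of `Z`, then `X`, `Y`, `Z` are
mutually independent: on boxes,
`P(X ∈ A, Y ∈ B, Z ∈ C) = P(X ∈ A, Z ∈ C) P(Y ∈ B) = P(X ∈ A) P(Z ∈ C) P(Y ∈ B)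
  = P(X ∈ A, Y ∈ B) P(Z ∈ C)`.
Hence the pair `(x1, x2)` is independent of `s`, and so is any function of it, such as
`x1 && x2`. -/

open MeasureTheory ProbabilityTheory

namespace ProbabilityTheory

variable {Ω α β γ : Type*} [MeasurableSpace Ω] [MeasurableSpace α] [MeasurableSpace β]
  [MeasurableSpace γ] {μ : Measure Ω} [IsProbabilityMeasure μ] {X : Ω → α} {Y : Ω → β} {Z : Ω → γ}

lemma IndepFun.prodMk_of_prodMk_indepFun (hX : Measurable X) (hY : Measurable Y)
    (hZ : Measurable Z) (hXZ_Y : IndepFun (fun ω ↦ (X ω, Z ω)) Y μ) (hXZ : IndepFun X Z μ) :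
    IndepFun (fun ω ↦ (X ω, Y ω)) Z μ := by
  rw [indepFun_iff_map_prod_eq_prod_map_map (hX.prodMk hY).aemeasurable hZ.aemeasurable]
  refine Measure.ext_prod₃' fun {A B C} hA hB hC ↦ ?_
  have hbox : (fun ω ↦ ((X ω, Y ω), Z ω)) ⁻¹' ((A ×ˢ B) ×ˢ C)
      = (fun ω ↦ (X ω, Z ω)) ⁻¹' (A ×ˢ C) ∩ Y ⁻¹' B := by
    ext ω; simp only [Set.mem_preimage, Set.mem_prod, Set.mem_inter_iff]; tauto
  have hpair : (fun ω ↦ (X ω, Y ω)) ⁻¹' (A ×ˢ B)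
      = (fun ω ↦ (X ω, Z ω)) ⁻¹' (A ×ˢ Set.univ) ∩ Y ⁻¹' B := by
    ext ω; simp
  rw [Measure.prod_prod, Measure.map_apply ((hX.prodMk hY).prodMk hZ) ((hA.prod hB).prod hC),
    Measure.map_apply (hX.prodMk hY) (hA.prod hB), Measure.map_apply hZ hC, hbox, hpair,
    hXZ_Y.measure_inter_preimage_eq_mul _ _ (hA.prod hC) hB,
    hXZ_Y.measure_inter_preimage_eq_mul _ _ (hA.prod .univ) hB,
    Set.mk_preimage_prod, Set.mk_preimage_prod, Set.preimage_univ, Set.inter_univ,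
    hXZ.measure_inter_preimage_eq_mul _ _ hA hC]
  ring

end ProbabilityTheory

theorem and_with_fresh_uniform_is_sid_general
    {Ω : Type*} [MeasurableSpace Ω] (μ : Measure Ω) [IsProbabilityMeasure μ]
    (x1 x2 s : Ω → Bool) (hx1 : Measurable x1) (hx2 : Measurable x2) (hs : Measurable s)
    (hfresh : IndepFun (fun ω => (x1 ω, s ω)) x2 μ)
    (hsid : IndepFun x1 s μ) :
    IndepFun (fun ω => x1 ω && x2 ω) s μ :=
  (hfresh.prodMk_of_prodMk_indepFun hx1 hx2 hs hsid).comp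
    (φ := fun p : Bool × Bool ↦ p.1 && p.2) (measurable_of_countable _) measurable_id

theorem and_with_fresh_uniform_is_sid
    {Ω : Type*} [MeasurableSpace Ω] (μ : Measure Ω) [IsProbabilityMeasure μ]
    (x1 x2 s : Ω → Bool) (hx1 : Measurable x1) (hx2 : Measurable x2) (hs : Measurable s)
    (hunif : ∀ b : Bool, μ {ω | x2 ω = b} = 1/2)
    (hfresh : IndepFun (fun ω => (x1 ω, s ω)) x2 μ)
    (hsid : IndepFun x1 s μ) :
    IndepFun (fun ω => x1 ω && x2 ω) s μ :=
  and_with_fresh_uniform_is_sid_general μ x1 x2 s hx1 hx2 hs hfresh hsid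
end

section
/- If x1 is independent of s, and x2 is uniform on Bool and independent of the pair (x1, s), then x1 ∨ x2 is independent of s. -/
/-! The two independence hypotheses make `x1`, `s`, `x2` mutually independent: on boxes,
`μ (x1 ∈ A, s ∈ B, x2 ∈ C) = μ (x1 ∈ A, s ∈ B) μ (x2 ∈ C) = μ (x1 ∈ A) μ (s ∈ B) μ (x2 ∈ C)`.
Hence the pair `(x1, x2)` is independent of `s`, and so is any function of it, such as
`x1 || x2`. -/

open MeasureTheory ProbabilityTheory

namespace ProbabilityTheory

variable {Ω β γ δ : Type*} {mΩ : MeasurableSpace Ω} {μ : Measure Ω} [IsZeroOrProbabilityMeasure μ]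
  [MeasurableSpace β] [MeasurableSpace γ] [MeasurableSpace δ] {X : Ω → β} {Y : Ω → γ} {Z : Ω → δ}

theorem IndepFun.prodMk_indepFun_of_prodMk_indepFun (hX : Measurable X) (hY : Measurable Y)
    (hZ : Measurable Z) (hXY : IndepFun X Y μ)
    (hXY_Z : IndepFun (fun ω ↦ (X ω, Y ω)) Z μ) :
    IndepFun (fun ω ↦ (X ω, Z ω)) Y μ := by
  have hXZ : IndepFun X Z μ := hXY_Z.comp measurable_fst measurable_id
  have hXZ_gen : MeasurableSpace.comap (fun ω ↦ (X ω, Z ω)) inferInstance =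
      MeasurableSpace.generateFrom {S | ∃ t ∈ Set.image2 (· ×ˢ ·) {A : Set β | MeasurableSet A}
        {C : Set δ | MeasurableSet C}, (fun ω ↦ (X ω, Z ω)) ⁻¹' t = S} := by
    rw [← generateFrom_prod, MeasurableSpace.comap_generateFrom]
    rfl
  refine IndepSets.indep (hX.prodMk hZ).comap_le hY.comap_le (isPiSystem_prod.comap _)
    (@MeasurableSpace.isPiSystem_measurableSet Ω (.comap Y inferInstance)) hXZ_gen
    (@MeasurableSpace.generateFrom_measurableSet Ω (.comap Y inferInstance)).symm
    ((IndepSets_iff _ _ μ).2 ?_)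
  rintro - - ⟨-, ⟨A, hA, C, hC, rfl⟩, rfl⟩ ⟨B, hB, rfl⟩
  have hXY_Z' := hXY_Z.measure_inter_preimage_eq_mul _ _ (hA.prod hB) hC
  have hXZ' := hXZ.measure_inter_preimage_eq_mul _ _ hA hC
  have hXY' := hXY.measure_inter_preimage_eq_mul _ _ hA hB
  simp only [Set.mk_preimage_prod] at hXY_Z' ⊢
  calc μ (X ⁻¹' A ∩ Z ⁻¹' C ∩ Y ⁻¹' B) = μ (X ⁻¹' A ∩ Y ⁻¹' B ∩ Z ⁻¹' C) := by
        rw [Set.inter_right_comm]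
    _ = μ (X ⁻¹' A ∩ Z ⁻¹' C) * μ (Y ⁻¹' B) := by
        rw [hXY_Z', hXY', hXZ', mul_right_comm]

end ProbabilityTheory

theorem or_with_fresh_uniform_is_sid_general
    {Ω : Type*} [MeasurableSpace Ω] (μ : Measure Ω) [IsProbabilityMeasure μ]
    (x1 x2 s : Ω → Bool) (hx1 : Measurable x1) (hx2 : Measurable x2) (hs : Measurable s)
    (hsid : IndepFun x1 s μ)
    (hfresh : IndepFun (fun ω => (x1 ω, s ω)) x2 μ) :
    IndepFun (fun ω => x1 ω || x2 ω) s μ :=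
  (hsid.prodMk_indepFun_of_prodMk_indepFun hx1 hs hx2 hfresh).comp
    (measurable_of_countable fun p : Bool × Bool ↦ p.1 || p.2) measurable_id

theorem or_with_fresh_uniform_is_sid
    {Ω : Type*} [MeasurableSpace Ω] (μ : Measure Ω) [IsProbabilityMeasure μ]
    (x1 x2 s : Ω → Bool) (hx1 : Measurable x1) (hx2 : Measurable x2) (hs : Measurable s)
    (hsid : IndepFun x1 s μ)
    (hunif : ∀ b : Bool, μ {ω | x2 ω = b} = 1/2)
    (hfresh : IndepFun (fun ω => (x1 ω, s ω)) x2 μ) :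
    IndepFun (fun ω => x1 ω || x2 ω) s μ :=
  or_with_fresh_uniform_is_sid_general μ x1 x2 s hx1 hx2 hs hsid hfresh
end

section
/- If x2 is uniform on Bool and independent of the pair (x1, s), then x1 ⊕ x2 is uniform on Bool and independent of s. -/
/-!
The joint law of `(W, Y)` with `W ⟂ Y` is `law W ⊗ law Y`, and the shear `(w, y) ↦ (w, φ w + y)`
preserves this product as soon as `law Y` is invariant under translations: each fibre is
translated by `φ w`. Hence `(W, φ W + Y)` again has law `law W ⊗ law Y`, so the one-time pad
`φ W + Y` is independent of `W` and distributed like `Y`. For `Bool`, addition is `xor` and the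
uniform law is translation invariant; take `W = (x1, s)` and `φ = Prod.fst`.
-/

open MeasureTheory ProbabilityTheory

namespace MeasureTheory.Measure

theorem isAddLeftInvariant_of_measure_singleton_eq {G : Type*} [AddGroup G] [Countable G]
    [MeasurableSpace G] [MeasurableSingletonClass G] [MeasurableAdd G]
    (ν : Measure G) (c : ENNReal) (h : ∀ g, ν {g} = c) : ν.IsAddLeftInvariant where
  map_add_left_eq_self g := ext_of_singleton fun b => by
    rw [map_apply (measurable_const_add g) (measurableSet_singleton b),
      Set.preimage_add_left_singleton, h, h]

end MeasureTheory.Measure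

namespace ProbabilityTheory

variable {Ω α G : Type*} [MeasurableSpace Ω] {μ : Measure Ω}
  [MeasurableSpace α] [AddGroup G] [MeasurableSpace G] [MeasurableAdd₂ G]
  {W : Ω → α} {Y : Ω → G} {φ : α → G}

theorem map_prod_add_eq_prod_map_of_indepFun [IsFiniteMeasure μ] (hW : Measurable W)
    (hY : Measurable Y) (hφ : Measurable φ) (hind : IndepFun W Y μ)
    [(μ.map Y).IsAddLeftInvariant] :
    μ.map (fun ω => (W ω, φ (W ω) + Y ω)) = (μ.map W).prod (μ.map Y) := by
  have hshear : MeasurePreserving (fun p : α × G => (p.1, φ p.1 + p.2))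
      ((μ.map W).prod (μ.map Y)) ((μ.map W).prod (μ.map Y)) :=
    (MeasurePreserving.id _).skew_product ((hφ.comp measurable_fst).add measurable_snd)
      (.of_forall fun a => map_add_left_eq_self _ (φ a))
  rw [← hshear.map_eq, ← (indepFun_iff_map_prod_eq_prod_map_map hW.aemeasurable
    hY.aemeasurable).mp hind, Measure.map_map hshear.measurable (hW.prodMk hY)]
  rfl

theorem indepFun_add_and_map_add_eq [IsProbabilityMeasure μ] (hW : Measurable W)
    (hY : Measurable Y) (hφ : Measurable φ) (hind : IndepFun W Y μ)
    [(μ.map Y).IsAddLeftInvariant] :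
    IndepFun W (fun ω => φ (W ω) + Y ω) μ ∧ μ.map (fun ω => φ (W ω) + Y ω) = μ.map Y := by
  have hjoint := map_prod_add_eq_prod_map_of_indepFun hW hY hφ hind
  have hsum : Measurable fun ω => φ (W ω) + Y ω := (hφ.comp hW).add hY
  have hlaw : μ.map (fun ω => φ (W ω) + Y ω) = μ.map Y := by
    have := congrArg (Measure.map Prod.snd) hjoint
    rwa [Measure.map_map measurable_snd (hW.prodMk hsum), Measure.map_snd_prod,
      Measure.map_apply hW MeasurableSet.univ, Set.preimage_univ, measure_univ, one_smul] at this
  refine ⟨?_, hlaw⟩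
  rw [indepFun_iff_map_prod_eq_prod_map_map hW.aemeasurable hsum.aemeasurable, hlaw]
  exact hjoint

end ProbabilityTheory

theorem xor_with_fresh_uniform_is_rud
    {Ω : Type*} [MeasurableSpace Ω] (μ : Measure Ω) [IsProbabilityMeasure μ]
    (x1 x2 s : Ω → Bool) (hx1 : Measurable x1) (hx2 : Measurable x2) (hs : Measurable s)
    (hunif : ∀ b : Bool, μ {ω | x2 ω = b} = 1/2)
    (hfresh : IndepFun (fun ω => (x1 ω, s ω)) x2 μ) :
    (∀ b : Bool, μ {ω | xor (x1 ω) (x2 ω) = b} = 1/2) ∧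
    IndepFun (fun ω => xor (x1 ω) (x2 ω)) s μ := by
  have hlaw_x2 : ∀ b, μ.map x2 {b} = 1/2 := fun b => by
    rw [Measure.map_apply hx2 (measurableSet_singleton b)]
    exact hunif b
  have := (μ.map x2).isAddLeftInvariant_of_measure_singleton_eq _ hlaw_x2
  obtain ⟨hindep, hlaw⟩ := indepFun_add_and_map_add_eq (hx1.prodMk hs) hx2 measurable_fst hfresh
  refine ⟨fun b => ?_, (hindep.comp measurable_snd measurable_id).symm⟩
  calc μ {ω | xor (x1 ω) (x2 ω) = b} = μ.map (fun ω => x1 ω + x2 ω) {b} :=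
        (Measure.map_apply (hx1.add hx2) (measurableSet_singleton b)).symm
    _ = 1/2 := by rw [hlaw, hlaw_x2]
end
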